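/- The function u(t,x) := Q(x − (c⁴ + 10μ²c²)·t) solves the 5th-order Gardner equation: for all (t,x) ∈ ℝ², u_t + u_{5x} + 10μ²u_{3x} + 20μ·u·u_{3x} + 10u²u_{3x} + 120μ³u·u_x + 180μ²u²u_x + 120μu³u_x + 10u_x³ + 30u⁴u_x + 40μ·u_x·u_{xx} + 40u·u_x·u_{xx} = 0 (here u_t = ∂u/∂t and u_x, u_{xx}, u_{kx} are iterated partial derivatives in x). -/

import Mathlib

/-! The traveling wave reduces the PDE to an ODE in `z = x - (c⁴ + 10μ²c²) t`.
Writing `Q' = -(√(4μ² + c²) sinh (c z) / c) Q²` and using `cosh² = sinh² + 1` shows that `Q`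
solves the soliton equation `Q'' = c² Q - 6μ Q² - 2Q³`, with first integral
`Q'² = c² Q² - 4μ Q³ - Q⁴`. Differentiating the soliton equation three more times expresses
`Q'''` and `Q⁽⁵⁾` as polynomials in `Q` times `Q'`; after eliminating `Q'²` by the first
integral, the PDE becomes a polynomial identity. -/

open Real

/-- The Gardner soliton profile. -/
noncomputable def gardnerQ (μ c : ℝ) (z : ℝ) : ℝ :=
  c ^ 2 / (2 * μ + Real.sqrt (4 * μ ^ 2 + c ^ 2) * Real.cosh (c * z))

/-- Partial derivative in `x`. -/
noncomputable def pdx (u : ℝ → ℝ → ℝ) (t x : ℝ) : ℝ := deriv (u t) x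

/-- `n`-th iterated partial derivative in `x`. -/
noncomputable def pdxn (n : ℕ) (u : ℝ → ℝ → ℝ) (t x : ℝ) : ℝ := deriv^[n] (u t) x

/-- Partial derivative in `t`. -/
noncomputable def pdt (u : ℝ → ℝ → ℝ) (t x : ℝ) : ℝ := deriv (fun s => u s x) t

/-- `deriv_sq` is the first integral of `deriv_deriv` with the integration constant of a profile
decaying at infinity; it does not follow from `deriv_deriv` alone. -/
structure IsGardnerProfile (μ c : ℝ) (f : ℝ → ℝ) : Prop where
  differentiable : Differentiable ℝ f
  differentiable_deriv : Differentiable ℝ (deriv f)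
  deriv_deriv : ∀ z, deriv (deriv f) z = c ^ 2 * f z - 6 * μ * f z ^ 2 - 2 * f z ^ 3
  deriv_sq : ∀ z, deriv f z ^ 2 = c ^ 2 * f z ^ 2 - 4 * μ * f z ^ 3 - f z ^ 4

def SolvesFifthOrderGardner (μ : ℝ) (u : ℝ → ℝ → ℝ) : Prop :=
  ∀ t x : ℝ,
    pdt u t x + pdxn 5 u t x
      + 10 * μ ^ 2 * pdxn 3 u t x
      + 20 * μ * u t x * pdxn 3 u t x
      + 10 * (u t x) ^ 2 * pdxn 3 u t x
      + 120 * μ ^ 3 * u t x * pdx u t x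
      + 180 * μ ^ 2 * (u t x) ^ 2 * pdx u t x
      + 120 * μ * (u t x) ^ 3 * pdx u t x
      + 10 * (pdx u t x) ^ 3
      + 30 * (u t x) ^ 4 * pdx u t x
      + 40 * μ * pdx u t x * pdxn 2 u t x
      + 40 * u t x * pdx u t x * pdxn 2 u t x = 0

section TravelingWave

variable {f : ℝ → ℝ} {v t x : ℝ}

lemma pdxn_travelingWave (n : ℕ) :
    pdxn n (fun t x => f (x - v * t)) t x = deriv^[n] f (x - v * t) := by
  simp only [pdxn, ← iteratedDeriv_eq_iterate, iteratedDeriv_comp_sub_const]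

lemma pdx_travelingWave : pdx (fun t x => f (x - v * t)) t x = deriv f (x - v * t) :=
  pdxn_travelingWave 1

lemma pdt_travelingWave (hf : DifferentiableAt ℝ f (x - v * t)) :
    pdt (fun t x => f (x - v * t)) t x = -v * deriv f (x - v * t) := by
  have hz : HasDerivAt (fun s => x - v * s) (-v) t := by
    simpa using ((hasDerivAt_id t).const_mul v).const_sub x
  exact (hf.hasDerivAt.comp t hz).deriv.trans (mul_comm _ _)

end TravelingWave

section CubicComp

variable (μ c : ℝ) {g : ℝ → ℝ} {g' z : ℝ} (hg : HasDerivAt g g' z)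
include hg

lemma hasDerivAt_cubic_comp :
    HasDerivAt (fun z => c ^ 2 * g z - 6 * μ * g z ^ 2 - 2 * g z ^ 3)
      ((c ^ 2 - 12 * μ * g z - 6 * g z ^ 2) * g') z := by
  refine (((hg.const_mul (c ^ 2)).sub ((hg.pow 2).const_mul (6 * μ))).sub
    ((hg.pow 3).const_mul 2)).congr_deriv ?_
  push_cast
  ring

lemma hasDerivAt_quadratic_comp :
    HasDerivAt (fun z => c ^ 2 - 12 * μ * g z - 6 * g z ^ 2) (-12 * (μ + g z) * g') z := by
  refine (((hg.const_mul (12 * μ)).const_sub (c ^ 2)).sub ((hg.pow 2).const_mul 6)).congr_deriv ?_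
  push_cast
  ring

end CubicComp

namespace IsGardnerProfile

variable {μ c : ℝ} {f : ℝ → ℝ} (hf : IsGardnerProfile μ c f)
include hf

lemma hasDerivAt (z : ℝ) : HasDerivAt f (deriv f z) z :=
  (hf.differentiable z).hasDerivAt

lemma hasDerivAt_deriv (z : ℝ) :
    HasDerivAt (deriv f) (c ^ 2 * f z - 6 * μ * f z ^ 2 - 2 * f z ^ 3) z :=
  hf.deriv_deriv z ▸ (hf.differentiable_deriv z).hasDerivAt

lemma iterate_deriv_three :
    deriv^[3] f = fun z => (c ^ 2 - 12 * μ * f z - 6 * f z ^ 2) * deriv f z := by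
  funext z
  rw [Function.iterate_succ_apply', Function.iterate_succ_apply', Function.iterate_one,
    funext hf.deriv_deriv]
  exact (hasDerivAt_cubic_comp μ c (hf.hasDerivAt z)).deriv

lemma iterate_deriv_four :
    deriv^[4] f = fun z => -12 * (μ + f z) * deriv f z ^ 2
      + (c ^ 2 - 12 * μ * f z - 6 * f z ^ 2) * (c ^ 2 * f z - 6 * μ * f z ^ 2 - 2 * f z ^ 3) := by
  funext z
  rw [Function.iterate_succ_apply', hf.iterate_deriv_three]
  refine (((hasDerivAt_quadratic_comp μ c (hf.hasDerivAt z)).mul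
    (hf.hasDerivAt_deriv z)).congr_deriv ?_).deriv
  ring

lemma iterate_deriv_five (z : ℝ) :
    deriv^[5] f z = -12 * deriv f z ^ 3
      - 36 * (μ + f z) * deriv f z * (c ^ 2 * f z - 6 * μ * f z ^ 2 - 2 * f z ^ 3)
      + (c ^ 2 - 12 * μ * f z - 6 * f z ^ 2) ^ 2 * deriv f z := by
  rw [Function.iterate_succ_apply', hf.iterate_deriv_four]
  have hq := hf.hasDerivAt z
  refine (((((hq.const_add μ).const_mul (-12)).mul ((hf.hasDerivAt_deriv z).pow 2)).add
    ((hasDerivAt_quadratic_comp μ c hq).mul (hasDerivAt_cubic_comp μ c hq))).congr_deriv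
    ?_).deriv
  simp only [Pi.pow_apply]
  push_cast
  ring

theorem solvesFifthOrderGardner :
    SolvesFifthOrderGardner μ (fun t x => f (x - (c ^ 4 + 10 * μ ^ 2 * c ^ 2) * t)) := by
  intro t x
  simp only [pdt_travelingWave (hf.differentiable _), pdx_travelingWave,
    pdxn_travelingWave, hf.iterate_deriv_five, hf.iterate_deriv_three, Function.iterate_succ,
    Function.iterate_zero, Function.comp_apply, id, hf.deriv_deriv]
  linear_combination (-2 * deriv f (x - (c ^ 4 + 10 * μ ^ 2 * c ^ 2) * t)) *
    hf.deriv_sq (x - (c ^ 4 + 10 * μ ^ 2 * c ^ 2) * t)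

end IsGardnerProfile

section GardnerSoliton

variable (μ : ℝ) {c : ℝ} (hc : c ≠ 0)
include hc

lemma gardnerQ_denom_pos (z : ℝ) : 0 < 2 * μ + √(4 * μ ^ 2 + c ^ 2) * cosh (c * z) := by
  have hA : |2 * μ| < √(4 * μ ^ 2 + c ^ 2) := by
    rw [← sqrt_sq_eq_abs]
    exact sqrt_lt_sqrt (sq_nonneg _) (by nlinarith [sq_pos_of_ne_zero hc])
  nlinarith [neg_abs_le (2 * μ), one_le_cosh (c * z), sqrt_nonneg (4 * μ ^ 2 + c ^ 2)]

lemma sqrt_mul_cosh_mul_gardnerQ (z : ℝ) :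
    √(4 * μ ^ 2 + c ^ 2) * cosh (c * z) * gardnerQ μ c z
      = c ^ 2 - 2 * μ * gardnerQ μ c z := by
  have hDQ : (2 * μ + √(4 * μ ^ 2 + c ^ 2) * cosh (c * z)) * gardnerQ μ c z = c ^ 2 :=
    mul_div_cancel₀ _ (gardnerQ_denom_pos μ hc z).ne'
  linear_combination hDQ

lemma sq_sqrt_mul_sinh_mul_gardnerQ (z : ℝ) :
    (√(4 * μ ^ 2 + c ^ 2) * sinh (c * z) * gardnerQ μ c z) ^ 2
      = c ^ 4 - 4 * μ * c ^ 2 * gardnerQ μ c z - c ^ 2 * gardnerQ μ c z ^ 2 := by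
  have hA : √(4 * μ ^ 2 + c ^ 2) ^ 2 = 4 * μ ^ 2 + c ^ 2 := sq_sqrt (by positivity)
  have hcosh := sqrt_mul_cosh_mul_gardnerQ μ hc z
  -- `(A sinh Q)² = (A cosh Q)² - A² Q² = (c² - 2μQ)² - (4μ² + c²) Q²` with `A = √(4μ² + c²)`
  linear_combination (-(√(4 * μ ^ 2 + c ^ 2) ^ 2 * gardnerQ μ c z ^ 2)) * cosh_sq (c * z)
    + (√(4 * μ ^ 2 + c ^ 2) * cosh (c * z) * gardnerQ μ c z + c ^ 2
      - 2 * μ * gardnerQ μ c z) * hcosh - gardnerQ μ c z ^ 2 * hA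

lemma hasDerivAt_gardnerQ (z : ℝ) :
    HasDerivAt (gardnerQ μ c)
      (-(√(4 * μ ^ 2 + c ^ 2) * sinh (c * z) / c) * gardnerQ μ c z ^ 2) z := by
  have hcz : HasDerivAt (fun w => c * w) c z := by simpa using (hasDerivAt_id z).const_mul c
  have hden := (hcz.cosh.const_mul √(4 * μ ^ 2 + c ^ 2)).const_add (2 * μ)
  have hD := (gardnerQ_denom_pos μ hc z).ne'
  refine ((hasDerivAt_const z (c ^ 2)).div hden hD).congr_deriv ?_
  rw [gardnerQ]
  field_simp
  ring

lemma deriv_gardnerQ :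
    deriv (gardnerQ μ c) =
      fun z => -(√(4 * μ ^ 2 + c ^ 2) * sinh (c * z) / c) * gardnerQ μ c z ^ 2 :=
  funext fun z => (hasDerivAt_gardnerQ μ hc z).deriv

lemma hasDerivAt_deriv_gardnerQ (z : ℝ) :
    HasDerivAt (deriv (gardnerQ μ c))
      (c ^ 2 * gardnerQ μ c z - 6 * μ * gardnerQ μ c z ^ 2 - 2 * gardnerQ μ c z ^ 3) z := by
  rw [deriv_gardnerQ μ hc]
  have hcz : HasDerivAt (fun w => c * w) c z := by simpa using (hasDerivAt_id z).const_mul c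
  have hsinh := ((hcz.sinh.const_mul √(4 * μ ^ 2 + c ^ 2)).div_const c).neg
  refine (hsinh.mul ((hasDerivAt_gardnerQ μ hc z).pow 2)).congr_deriv ?_
  have hcosh := sqrt_mul_cosh_mul_gardnerQ μ hc z
  have hsinh_sq := sq_sqrt_mul_sinh_mul_gardnerQ μ hc z
  simp only [Pi.neg_apply, Pi.pow_apply]
  field_simp
  linear_combination -c ^ 2 * gardnerQ μ c z * hcosh + 2 * gardnerQ μ c z * hsinh_sq

lemma isGardnerProfile_gardnerQ : IsGardnerProfile μ c (gardnerQ μ c) where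
  differentiable z := (hasDerivAt_gardnerQ μ hc z).differentiableAt
  differentiable_deriv z := (hasDerivAt_deriv_gardnerQ μ hc z).differentiableAt
  deriv_deriv z := (hasDerivAt_deriv_gardnerQ μ hc z).deriv
  deriv_sq z := by
    rw [deriv_gardnerQ μ hc]
    field_simp
    linear_combination gardnerQ μ c z ^ 2 * sq_sqrt_mul_sinh_mul_gardnerQ μ hc z

end GardnerSoliton

theorem gardner_soliton_solves_fifth_order_gardner_general
    (μ c : ℝ) (hc : 0 < c) :
    let u : ℝ → ℝ → ℝ := fun t x => gardnerQ μ c (x - (c ^ 4 + 10 * μ ^ 2 * c ^ 2) * t)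
    ∀ t x : ℝ,
      pdt u t x + pdxn 5 u t x
        + 10 * μ ^ 2 * pdxn 3 u t x
        + 20 * μ * u t x * pdxn 3 u t x
        + 10 * (u t x) ^ 2 * pdxn 3 u t x
        + 120 * μ ^ 3 * u t x * pdx u t x
        + 180 * μ ^ 2 * (u t x) ^ 2 * pdx u t x
        + 120 * μ * (u t x) ^ 3 * pdx u t x
        + 10 * (pdx u t x) ^ 3
        + 30 * (u t x) ^ 4 * pdx u t x
        + 40 * μ * pdx u t x * pdxn 2 u t x
        + 40 * u t x * pdx u t x * pdxn 2 u t x = 0 :=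
  (isGardnerProfile_gardnerQ μ hc.ne').solvesFifthOrderGardner

theorem gardner_soliton_solves_fifth_order_gardner
    (μ c : ℝ) (hμ : 0 < μ) (hc : 0 < c) :
    let u : ℝ → ℝ → ℝ := fun t x => gardnerQ μ c (x - (c ^ 4 + 10 * μ ^ 2 * c ^ 2) * t)
    ∀ t x : ℝ,
      pdt u t x + pdxn 5 u t x
        + 10 * μ ^ 2 * pdxn 3 u t x
        + 20 * μ * u t x * pdxn 3 u t x
        + 10 * (u t x) ^ 2 * pdxn 3 u t x
        + 120 * μ ^ 3 * u t x * pdx u t x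
        + 180 * μ ^ 2 * (u t x) ^ 2 * pdx u t x
        + 120 * μ * (u t x) ^ 3 * pdx u t x
        + 10 * (pdx u t x) ^ 3
        + 30 * (u t x) ^ 4 * pdx u t x
        + 40 * μ * pdx u t x * pdxn 2 u t x
        + 40 * u t x * pdx u t x * pdxn 2 u t x = 0 :=
  gardner_soliton_solves_fifth_order_gardner_general μ c hc
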